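/- Let g* : ℕ → ℕ → ℕ be primitive recursive (Primrec₂ g*) such that for every y the sequence s ↦ g* y s is eventually constant. For x : ℕ let s_x be the least s such that g* y t = g* y s for all y ≤ x and all t ≥ s. Then there exists an injective primitive recursive function f : ℕ → ℕ such that every orbit of f is an ω-chain, f has infinitely many orbits, and for every x the set {b : ℕ | b ∉ Set.range f ∧ b < s_x} has at most x + 1 elements. (A punctual structure made of ω-chains whose chain-heads are sparse below the stabilization stages of the approximation.) -/

import Mathlib

/-- The orbit of `a` under `f`. -/
def Orbit (f : ℕ → ℕ) (a : ℕ) : Set ℕ := {b : ℕ | ∃ m n : ℕ, f^[m] a = f^[n] b}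

/-- The orbit of `a` under `f` is an ω-chain. -/
def IsOmegaChain (f : ℕ → ℕ) (a : ℕ) : Prop :=
  (Orbit f a).Infinite ∧ ∃ b ∈ Orbit f a, b ∉ Set.range f

/-!
The function is built stage by stage by course-of-values recursion, so it is primitive recursive.
At stage `n` the value is normally the fresh odd number `2 n + 1`. When `n` is the current end of
the chain of `0` and some requirement `x` sees more than `x + 1` numbers outside the range so far
below `lastChange gs x n`, its current guess at the stabilization stage `s_x`, the least such `x`
glues the largest such nonzero number, a head so far, onto the chain of `0`.

All gluing happens at the end of the chain of `0`, whose head `0` is never covered, so every orbit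
keeps a head and no cycle forms. Once `n ≥ s_x` the guess is correct, and the chain of `0` ends at
the current stage infinitely often, so more than `x + 1` heads below `s_x` would force infinitely
many values below `s_x`. Each requirement acts only finitely often, because its guesses are
bounded, and this leaves infinitely many heads.
-/

open Function Set Finset

section Orbits

variable {f : ℕ → ℕ} {a b : ℕ}

theorem mem_orbit_self (f : ℕ → ℕ) (a : ℕ) : a ∈ Orbit f a := ⟨0, 0, rfl⟩

theorem iterate_mem_orbit (f : ℕ → ℕ) (a m : ℕ) : f^[m] a ∈ Orbit f a := ⟨m, 0, rfl⟩

theorem mem_orbit_apply_of_mem_orbit (h : b ∈ Orbit f a) : b ∈ Orbit f (f a) := by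
  obtain ⟨m, n, hmn⟩ := h
  exact ⟨m, n + 1, by rw [← iterate_succ_apply, iterate_succ_apply', hmn, iterate_succ_apply']⟩

theorem iterate_succ_mem_range (f : ℕ → ℕ) (a k : ℕ) : f^[k + 1] a ∈ Set.range f :=
  ⟨f^[k] a, (iterate_succ_apply' f k a).symm⟩

theorem eq_of_iterate_eq_iterate_of_notMem_range (hf : Injective f) (ha : a ∉ Set.range f)
    {m n : ℕ} (h : f^[m] a = f^[n] b) (hmn : m ≤ n) : a = b := by
  have hab : a = f^[n - m] b :=
    hf.iterate m <| by rw [← iterate_add_apply, Nat.add_sub_cancel' hmn, h]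
  cases hk : n - m with
  | zero => simpa [hk] using hab
  | succ k => exact absurd (hab ▸ hk ▸ iterate_succ_mem_range f b k) ha

theorem eq_of_mem_orbit_of_notMem_range (hf : Injective f) (ha : a ∉ Set.range f)
    (hb : b ∉ Set.range f) (h : b ∈ Orbit f a) : a = b := by
  obtain ⟨m, n, hmn⟩ := h
  rcases le_total m n with hle | hle
  · exact eq_of_iterate_eq_iterate_of_notMem_range hf ha hmn hle
  · exact (eq_of_iterate_eq_iterate_of_notMem_range hf hb hmn.symm hle).symm

theorem infinite_orbits_of_infinite_compl_range (hf : Injective f) (h : (Set.range f)ᶜ.Infinite) :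
    {O : Set ℕ | ∃ n : ℕ, O = Orbit f n}.Infinite := by
  have hinj : InjOn (Orbit f) (Set.range f)ᶜ := fun a ha b hb hab =>
    eq_of_mem_orbit_of_notMem_range hf ha hb (hab ▸ mem_orbit_self f b)
  exact (h.image hinj).mono (by rintro O ⟨b, -, rfl⟩; exact ⟨b, rfl⟩)

theorem notMem_periodicPts_of_notMem_range (ha : a ∉ Set.range f) : a ∉ periodicPts f := by
  rintro ⟨n, hn, hper⟩
  obtain ⟨k, rfl⟩ := Nat.exists_eq_succ_of_ne_zero hn.ne'
  exact ha (hper ▸ iterate_succ_mem_range f a k)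

theorem mem_periodicPts_of_iterate_mem (hf : Injective f) {i : ℕ}
    (h : f^[i] a ∈ periodicPts f) : a ∈ periodicPts f := by
  obtain ⟨n, hn, hper⟩ := h
  refine mk_mem_periodicPts hn (hf.iterate i ?_)
  rw [← iterate_add_apply, add_comm, iterate_add_apply]
  exact hper

theorem injective_iterate_of_notMem_periodicPts (hf : Injective f) (ha : a ∉ periodicPts f) :
    Injective fun m => f^[m] a := by
  intro m n h
  by_contra hne
  rcases lt_or_gt_of_ne hne with hlt | hlt
  · exact ha (mk_mem_periodicPts (by omega) (iterate_cancel hf h.symm))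
  · exact ha (mk_mem_periodicPts (by omega) (iterate_cancel hf h))

theorem orbit_infinite_of_notMem_periodicPts (hf : Injective f) (ha : a ∉ periodicPts f) :
    (Orbit f a).Infinite :=
  infinite_of_injective_forall_mem (injective_iterate_of_notMem_periodicPts hf ha)
    (iterate_mem_orbit f a)

theorem exists_apply_iterate_le_of_mem_periodicPts (h : a ∈ periodicPts f) :
    ∃ j, f (f^[j] a) ≤ f^[j] a := by
  obtain ⟨n, hn, hper⟩ := h
  by_contra! hlt
  have hmono : StrictMono fun j => f^[j] a := strictMono_nat_of_lt_succ fun j => by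
    simpa only [iterate_succ_apply'] using hlt j
  exact (hmono hn).ne' hper

end Orbits

theorem exists_first_ge_of_injective {u : ℕ → ℕ} (hu : Injective u) (N : ℕ) :
    ∃ i ≤ N, N ≤ u i ∧ ∀ j < i, u j < N := by
  have hex : ∃ i ≤ N, N ≤ u i := by
    by_contra! h
    have := Finset.card_le_card_of_injOn u (s := Finset.range (N + 1)) (t := Finset.range N)
      (fun i hi => by simpa using h i (by simpa [Nat.lt_succ_iff] using hi)) hu.injOn
    simp at this
  obtain ⟨i, hiN, hi⟩ := hex
  classical
  have hex' : ∃ i, N ≤ u i := ⟨i, hi⟩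
  exact ⟨Nat.find hex', (Nat.find_min' hex' hi).trans hiN, Nat.find_spec hex',
    fun j hj => not_le.1 (Nat.find_min hex' hj)⟩

section Cutoff

def cutoff (F : ℕ → ℕ) (n c : ℕ) : ℕ := if c < n then F c else c

variable {F : ℕ → ℕ} {n : ℕ}

theorem exists_iterate_cutoff_eq (F : ℕ → ℕ) (n a k : ℕ) :
    ∃ i, (cutoff F n)^[k] a = F^[i] a := by
  induction k with
  | zero => exact ⟨0, rfl⟩
  | succ k ih =>
    obtain ⟨i, hi⟩ := ih
    rw [iterate_succ_apply', hi, cutoff]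
    split_ifs
    · exact ⟨i + 1, (iterate_succ_apply' F i a).symm⟩
    · exact ⟨i, rfl⟩

theorem iterate_cutoff_eq_of_forall_lt {a k : ℕ} (h : ∀ j < k, F^[j] a < n) :
    (cutoff F n)^[k] a = F^[k] a := by
  induction k with
  | zero => rfl
  | succ k ih =>
    rw [iterate_succ_apply', iterate_succ_apply', ih fun j hj => h j (by omega), cutoff,
      if_pos (h k (by omega))]

theorem iterate_cutoff_of_le {c : ℕ} (h : n ≤ c) (k : ℕ) : (cutoff F n)^[k] c = c :=
  iterate_fixed (show cutoff F n c = c from if_neg (not_lt.2 h)) k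

end Cutoff

section Stabilization

variable (gs : ℕ → ℕ → ℕ)

/-- Never holds at `s = 0`, as `0 - 1 = 0`. -/
def IsChangePoint (x s : ℕ) : Prop := ∃ y ≤ x, gs y (s - 1) ≠ gs y s

instance (x : ℕ) : DecidablePred (IsChangePoint gs x) := fun _ => by
  unfold IsChangePoint; infer_instance

def lastChange (x n : ℕ) : ℕ := Nat.findGreatest (IsChangePoint gs x) n

variable {gs} {x n : ℕ}

theorem lastChange_le (x n : ℕ) : lastChange gs x n ≤ n := Nat.findGreatest_le n

theorem lastChange_mono {y : ℕ} (h : y ≤ x) (n : ℕ) : lastChange gs y n ≤ lastChange gs x n :=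
  Nat.findGreatest_mono_left (fun _ ⟨z, hz, hne⟩ => ⟨z, hz.trans h, hne⟩) n

theorem lastChange_le_of_stable {s : ℕ} (hs : ∀ y ≤ x, ∀ t ≥ s, gs y t = gs y s) (n : ℕ) :
    lastChange gs x n ≤ s := by
  by_contra! hlt
  obtain ⟨y, hy, hne⟩ : IsChangePoint gs x (lastChange gs x n) :=
    Nat.findGreatest_of_ne_zero rfl (by omega)
  exact hne ((hs y hy _ (by omega)).trans (hs y hy _ hlt.le).symm)

theorem le_lastChange {sx : ℕ} (hsx : IsLeast {s | ∀ y ≤ x, ∀ t ≥ s, gs y t = gs y s} sx)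
    (hn : sx ≤ n) : sx ≤ lastChange gs x n := by
  rcases Nat.eq_zero_or_pos sx with h0 | hpos
  · omega
  refine Nat.le_findGreatest hn (by_contra fun hnot => ?_)
  have hstable : sx - 1 ∈ {s | ∀ y ≤ x, ∀ t ≥ s, gs y t = gs y s} := by
    intro y hy t ht
    rcases eq_or_lt_of_le ht with rfl | hlt
    · rfl
    · rw [hsx.1 y hy t (by omega)]
      exact (not_not.1 fun hne => hnot ⟨y, hy, hne⟩).symm
  have := hsx.2 hstable
  omega

theorem lastChange_eq {sx : ℕ} (hsx : IsLeast {s | ∀ y ≤ x, ∀ t ≥ s, gs y t = gs y s} sx)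
    (hn : sx ≤ n) : lastChange gs x n = sx :=
  le_antisymm (lastChange_le_of_stable hsx.1 n) (le_lastChange hsx hn)

theorem exists_stable (hev : ∀ y : ℕ, ∃ s₀ : ℕ, ∀ t ≥ s₀, gs y t = gs y s₀) (x : ℕ) :
    ∃ s, ∀ y ≤ x, ∀ t ≥ s, gs y t = gs y s := by
  choose s₀ hs₀ using hev
  refine ⟨(Finset.range (x + 1)).sup s₀, fun y hy t ht => ?_⟩
  have hy' : s₀ y ≤ (Finset.range (x + 1)).sup s₀ :=
    Finset.le_sup (Finset.mem_range.2 (by omega))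
  rw [hs₀ y t (hy'.trans ht), hs₀ y _ hy']

end Stabilization

namespace SparseHeads

variable (gs : ℕ → ℕ → ℕ)

/-- The end of the chain of `0` under `c ↦ L[c]`: the iteration stops there, since
`L.getD c c = c` once `c ≥ L.length`. -/
def zeroChainEnd (L : List ℕ) : ℕ := (fun c => L.getD c c)^[L.length + 1] 0

def uncovered (L : List ℕ) (m : ℕ) : Finset ℕ := (Finset.range m).filter (· ∉ L)

def Violated (L : List ℕ) (x : ℕ) : Prop :=
  x + 1 < #(uncovered L (lastChange gs x L.length))

instance (L : List ℕ) : DecidablePred (Violated gs L) := fun _ => Nat.decLt _ _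

def coverValue (L : List ℕ) (x : ℕ) : ℕ :=
  Nat.findGreatest (fun b => b ≠ 0 ∧ b ∉ L) (lastChange gs x L.length - 1)

def nextValue (L : List ℕ) : ℕ :=
  if zeroChainEnd L = L.length then
    ((List.range L.length).find? (Violated gs L ·)).elim (2 * L.length + 1) (coverValue gs L)
  else 2 * L.length + 1

def history : ℕ → List ℕ
  | 0 => []
  | n + 1 => history n ++ [nextValue gs (history n)]

def chainFun (n : ℕ) : ℕ := nextValue gs (history gs n)

def IsTurn (n : ℕ) : Prop := zeroChainEnd (history gs n) = n

variable {gs} {L : List ℕ} {x n : ℕ}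

theorem history_eq_map (n : ℕ) : history gs n = (List.range n).map (chainFun gs) := by
  induction n with
  | zero => rfl
  | succ n ih => rw [history, List.range_succ, List.map_append, ← ih]; rfl

@[simp]
theorem length_history (n : ℕ) : (history gs n).length = n := by simp [history_eq_map]

theorem mem_history {b : ℕ} : b ∈ history gs n ↔ ∃ k < n, chainFun gs k = b := by
  simp [history_eq_map]

theorem isTurn_iff : IsTurn gs n ↔ (cutoff (chainFun gs) n)^[n + 1] 0 = n := by
  have hcut : (fun c => (history gs n).getD c c) = cutoff (chainFun gs) n := by
    funext c
    by_cases hc : c < n <;> simp [cutoff, hc, history_eq_map, List.getD_eq_getElem?_getD]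
  rw [IsTurn, zeroChainEnd, hcut, length_history]

theorem Violated.lt_length (h : Violated gs L x) : x < L.length := by
  have h1 : #(uncovered L (lastChange gs x L.length)) ≤ lastChange gs x L.length := by
    simpa [uncovered] using Finset.card_filter_le (Finset.range (lastChange gs x L.length)) (· ∉ L)
  have := lastChange_le (gs := gs) x L.length
  unfold Violated at h
  omega

theorem nextValue_eq_or (L : List ℕ) :
    nextValue gs L = 2 * L.length + 1 ∨
      ∃ x, zeroChainEnd L = L.length ∧ Violated gs L x ∧ (∀ y < x, ¬ Violated gs L y) ∧
        nextValue gs L = coverValue gs L x := by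
  unfold nextValue
  split_ifs with hturn
  · cases hfind : (List.range L.length).find? (Violated gs L ·) with
    | none => exact Or.inl rfl
    | some x =>
      obtain ⟨hx, -, hmin⟩ := List.find?_range_eq_some.1 hfind
      exact Or.inr ⟨x, hturn, by simpa using hx, fun y hy => by simpa using hmin y hy, rfl⟩
  · exact Or.inl rfl

theorem nextValue_eq_coverValue (hturn : zeroChainEnd L = L.length) (hv : Violated gs L x) :
    ∃ y ≤ x, Violated gs L y ∧ nextValue gs L = coverValue gs L y := by
  cases hfind : (List.range L.length).find? (Violated gs L ·) with
  | none =>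
    exact absurd (List.find?_eq_none.1 hfind x (List.mem_range.2 hv.lt_length)) (by simpa using hv)
  | some y =>
    obtain ⟨hy, -, hmin⟩ := List.find?_range_eq_some.1 hfind
    refine ⟨y, not_lt.1 fun hxy => by simpa [hv] using hmin x hxy, by simpa using hy, ?_⟩
    rw [nextValue, if_pos hturn, hfind]
    rfl

theorem coverValue_spec (hv : Violated gs L x) :
    coverValue gs L x ≠ 0 ∧ coverValue gs L x ∉ L ∧
      coverValue gs L x < lastChange gs x L.length := by
  obtain ⟨b, hb, hb0⟩ := Finset.exists_mem_ne (s := uncovered L (lastChange gs x L.length))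
    (by unfold Violated at hv; omega) 0
  obtain ⟨hbM, hbL⟩ := by simpa [uncovered] using hb
  have hspec : coverValue gs L x ≠ 0 ∧ coverValue gs L x ∉ L :=
    Nat.findGreatest_spec (P := fun b => b ≠ 0 ∧ b ∉ L) (by omega : b ≤ _ - 1) ⟨hb0, hbL⟩
  exact ⟨hspec.1, hspec.2, (Nat.findGreatest_le _).trans_lt (by omega)⟩

theorem eq_zero_or_mem_of_coverValue_lt {b : ℕ}
    (hb : coverValue gs L x < b) (hbM : b < lastChange gs x L.length) : b = 0 ∨ b ∈ L := by
  have := Nat.findGreatest_is_greatest hb (by omega)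
  tauto

theorem chainFun_lt_or_eq (n : ℕ) : chainFun gs n < n ∨ chainFun gs n = 2 * n + 1 := by
  rcases nextValue_eq_or (history gs n) with h | ⟨x, -, hv, -, h⟩
  · exact Or.inr (by simpa [chainFun] using h)
  · obtain ⟨-, -, hlt⟩ := coverValue_spec hv
    rw [length_history] at hlt
    exact Or.inl (by rw [chainFun, h]; exact hlt.trans_le (lastChange_le x n))

theorem isTurn_and_violated_of_chainFun_lt (h : chainFun gs n < n) :
    IsTurn gs n ∧ ∃ x, Violated gs (history gs n) x ∧ (∀ y < x, ¬ Violated gs (history gs n) y) ∧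
      chainFun gs n = coverValue gs (history gs n) x := by
  rcases nextValue_eq_or (history gs n) with h' | ⟨x, hturn, hv, hmin, h'⟩
  · rw [chainFun, h', length_history] at h
    omega
  · exact ⟨by simpa [IsTurn] using hturn, x, hv, hmin, h'⟩

theorem chainFun_lt_lastChange (hturn : IsTurn gs n) (hv : Violated gs (history gs n) x) :
    chainFun gs n < lastChange gs x n := by
  obtain ⟨y, hyx, hvy, h⟩ := nextValue_eq_coverValue (by rw [length_history]; exact hturn) hv
  obtain ⟨-, -, hlt⟩ := coverValue_spec hvy
  rw [length_history] at hlt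
  rw [chainFun, h]
  exact hlt.trans_le (lastChange_mono hyx n)

theorem chainFun_notMem_history (n : ℕ) : chainFun gs n ∉ history gs n := by
  rcases chainFun_lt_or_eq n with h | h
  · obtain ⟨-, x, hv, -, hx⟩ := isTurn_and_violated_of_chainFun_lt h
    exact hx ▸ (coverValue_spec hv).2.1
  · rw [mem_history, h]
    rintro ⟨k, hk, hkn⟩
    rcases chainFun_lt_or_eq (gs := gs) k with h' | h' <;> omega

theorem chainFun_injective : Injective (chainFun gs) := by
  intro k n h
  by_contra hne
  rcases lt_or_gt_of_ne hne with hlt | hlt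
  · exact chainFun_notMem_history n (mem_history.2 ⟨k, hlt, h⟩)
  · exact chainFun_notMem_history k (mem_history.2 ⟨n, hlt, h.symm⟩)

theorem zero_notMem_range : 0 ∉ Set.range (chainFun gs) := by
  rintro ⟨n, hn⟩
  rcases chainFun_lt_or_eq n with h | h
  · obtain ⟨-, x, hv, -, hx⟩ := isTurn_and_violated_of_chainFun_lt h
    exact (coverValue_spec hv).1 (hx ▸ hn)
  · omega

theorem exists_iterate_eq_of_isTurn (h : IsTurn gs n) : ∃ i, (chainFun gs)^[i] 0 = n := by
  obtain ⟨i, hi⟩ := exists_iterate_cutoff_eq (chainFun gs) n 0 (n + 1)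
  exact ⟨i, hi ▸ isTurn_iff.1 h⟩

theorem exists_isTurn_gt (N : ℕ) : ∃ n, N < n ∧ IsTurn gs n := by
  have hinj := injective_iterate_of_notMem_periodicPts chainFun_injective
    (notMem_periodicPts_of_notMem_range (zero_notMem_range (gs := gs)))
  obtain ⟨i, hiN, hNi, hbelow⟩ := exists_first_ge_of_injective hinj (N + 1)
  set m := (chainFun gs)^[i] 0
  refine ⟨m, by omega, isTurn_iff.2 ?_⟩
  rw [show m + 1 = (m + 1 - i) + i by omega, iterate_add_apply,
    iterate_cutoff_eq_of_forall_lt fun j hj => (hbelow j hj).trans_le hNi]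
  exact iterate_cutoff_of_le le_rfl _

theorem isTurn_of_chainFun_le (h : chainFun gs n ≤ n) : IsTurn gs n := by
  rcases chainFun_lt_or_eq n with h' | h'
  · exact (isTurn_and_violated_of_chainFun_lt h').1
  · omega

/-- The largest element `c` of a cycle has `chainFun c ≤ c`, so it would lie on the chain of `0`,
which is not periodic. -/
theorem notMem_periodicPts (a : ℕ) : a ∉ periodicPts (chainFun gs) := by
  intro ha
  obtain ⟨j, hj⟩ := exists_apply_iterate_le_of_mem_periodicPts ha
  obtain ⟨i, hi⟩ := exists_iterate_eq_of_isTurn (isTurn_of_chainFun_le hj)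
  obtain ⟨p, hp, hper⟩ := ha
  refine notMem_periodicPts_of_notMem_range (zero_notMem_range (gs := gs))
    (mem_periodicPts_of_iterate_mem chainFun_injective (i := i) ?_)
  rw [hi]
  exact mk_mem_periodicPts hp (hper.apply_iterate j)

theorem exists_head_mem_orbit (a : ℕ) :
    ∃ b ∈ Orbit (chainFun gs) a, b ∉ Set.range (chainFun gs) := by
  induction a using Nat.strong_induction_on with
  | _ a ih =>
    by_cases ha : a ∈ Set.range (chainFun gs)
    · obtain ⟨c, rfl⟩ := ha
      rcases lt_or_ge c (chainFun gs c) with hlt | hle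
      · obtain ⟨b, hb, hbr⟩ := ih c hlt
        exact ⟨b, mem_orbit_apply_of_mem_orbit hb, hbr⟩
      · obtain ⟨i, hi⟩ := exists_iterate_eq_of_isTurn (isTurn_of_chainFun_le hle)
        exact ⟨0, ⟨0, i + 1, by rw [iterate_succ_apply', hi]; rfl⟩, zero_notMem_range⟩
    · exact ⟨a, mem_orbit_self _ a, ha⟩

theorem isOmegaChain (n : ℕ) : IsOmegaChain (chainFun gs) n :=
  ⟨orbit_infinite_of_notMem_periodicPts chainFun_injective (notMem_periodicPts n),
    exists_head_mem_orbit n⟩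

/-- Covering stages `n` are those with `chainFun n < n`; if there are finitely many, all large even
numbers are heads. -/
theorem infinite_compl_range_of_finite (h : {n | chainFun gs n < n}.Finite) :
    (Set.range (chainFun gs))ᶜ.Infinite := by
  obtain ⟨B, hB⟩ := h.bddAbove
  refine infinite_of_injective_forall_mem (f := fun k => 2 * (B + 1 + k))
    (fun k l hkl => by simpa using hkl) fun k ⟨m, hm⟩ => ?_
  rcases chainFun_lt_or_eq (gs := gs) m with hlt | heq
  · have := hB hlt
    omega
  · omega

theorem finite_violated_stages (hev : ∀ y : ℕ, ∃ s₀ : ℕ, ∀ t ≥ s₀, gs y t = gs y s₀) (y : ℕ) :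
    {n | chainFun gs n < n ∧ Violated gs (history gs n) y}.Finite := by
  obtain ⟨s, hs⟩ := exists_stable hev y
  refine Finite.of_finite_image ((finite_Iio s).subset ?_) (chainFun_injective (gs := gs)).injOn
  rintro _ ⟨n, ⟨hlt, hv⟩, rfl⟩
  exact (chainFun_lt_lastChange (isTurn_and_violated_of_chainFun_lt hlt).1 hv).trans_le
    (lastChange_le_of_stable hs n)

theorem exists_forall_not_violated (hev : ∀ y : ℕ, ∃ s₀ : ℕ, ∀ t ≥ s₀, gs y t = gs y s₀)
    (k : ℕ) : ∃ T, ∀ n ≥ T, chainFun gs n < n → ∀ y < k, ¬ Violated gs (history gs n) y := by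
  obtain ⟨B, hB⟩ := ((finite_lt_nat k).biUnion fun y _ => finite_violated_stages hev y).bddAbove
  exact ⟨B + 1, fun n hn hlt y hy hv => by have := hB (mem_biUnion hy ⟨hlt, hv⟩); omega⟩

/-- Let `b₀ = chainFun n₀` be the least value of a late covering stage. Its requirement `x` exceeds
the number of heads and saw more than `x + 1` uncovered numbers, so one of them, `e ≠ b₀`, is
covered later, necessarily at a covering stage; but `e < b₀`, as `b₀` was the largest candidate. -/
theorem infinite_compl_range_of_infinite
    (hev : ∀ y : ℕ, ∃ s₀ : ℕ, ∀ t ≥ s₀, gs y t = gs y s₀)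
    (hcov : {n | chainFun gs n < n}.Infinite) :
    (Set.range (chainFun gs))ᶜ.Infinite := by
  intro hH
  obtain ⟨T, hT⟩ := exists_forall_not_violated hev #hH.toFinset
  classical
  have hlate : ∃ b, ∃ n ≥ T, chainFun gs n < n ∧ chainFun gs n = b := by
    obtain ⟨n, hn, hnT⟩ := hcov.exists_gt T
    exact ⟨_, n, hnT.le, hn, rfl⟩
  obtain ⟨n₀, hn₀T, hn₀, hb₀⟩ := Nat.find_spec hlate
  obtain ⟨-, x, hv, -, hcover⟩ := isTurn_and_violated_of_chainFun_lt hn₀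
  have hxH : #hH.toFinset ≤ x := not_lt.1 fun hx => hT n₀ hn₀T hn₀ x hx hv
  have hcard : x + 1 < #(uncovered (history gs n₀) (lastChange gs x n₀)) := by
    simpa [Violated] using hv
  set U := uncovered (history gs n₀) (lastChange gs x n₀)
  have hb₀U : chainFun gs n₀ ∈ U := by
    obtain ⟨-, hnotMem, hlt⟩ := coverValue_spec hv
    rw [length_history] at hlt
    simpa [U, uncovered, hcover] using ⟨hlt, hnotMem⟩
  obtain ⟨e, heU, heH⟩ := Finset.exists_mem_notMem_of_card_lt_card (s := hH.toFinset)
    (t := U.erase (chainFun gs n₀)) (by rw [Finset.card_erase_of_mem hb₀U]; omega)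
  obtain ⟨hene, heU⟩ := Finset.mem_erase.1 heU
  obtain ⟨heM, hehist⟩ : e < lastChange gs x n₀ ∧ e ∉ history gs n₀ := by
    simpa [U, uncovered] using heU
  obtain ⟨m, rfl⟩ : e ∈ Set.range (chainFun gs) := by simpa using heH
  have hlt : chainFun gs m < chainFun gs n₀ := by
    refine lt_of_le_of_ne (not_lt.1 fun hgt => ?_) hene
    rcases eq_zero_or_mem_of_coverValue_lt (hcover ▸ hgt) (by simpa using heM) with h0 | hmem
    · exact zero_notMem_range ⟨m, h0⟩
    · exact hehist hmem
  have hm : n₀ < m := by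
    by_contra! hle
    rcases hle.lt_or_eq with hlt' | rfl
    · exact hehist (mem_history.2 ⟨m, hlt', rfl⟩)
    · exact hene rfl
  have := lastChange_le (gs := gs) x n₀
  have := Nat.find_min' hlate ⟨m, by omega, by omega, rfl⟩
  omega

theorem infinite_compl_range (hev : ∀ y : ℕ, ∃ s₀ : ℕ, ∀ t ≥ s₀, gs y t = gs y s₀) :
    (Set.range (chainFun gs))ᶜ.Infinite := by
  by_cases hcov : {n | chainFun gs n < n}.Finite
  · exact infinite_compl_range_of_finite hcov
  · exact infinite_compl_range_of_infinite hev hcov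

theorem ncard_heads_le {sx : ℕ}
    (hsx : IsLeast {s | ∀ y ≤ x, ∀ t ≥ s, gs y t = gs y s} sx) :
    {b | b ∉ Set.range (chainFun gs) ∧ b < sx}.ncard ≤ x + 1 := by
  by_contra! hcard
  have hlate : ∀ n, sx ≤ n → IsTurn gs n → chainFun gs n < sx := by
    intro n hn hturn
    have hM := lastChange_eq hsx hn
    have hv : Violated gs (history gs n) x := by
      rw [Violated, length_history, hM, ← Set.ncard_coe_finset]
      refine hcard.trans_le (Set.ncard_le_ncard fun b ⟨hb, hbs⟩ => ?_)
      simp only [uncovered, Finset.coe_filter, Finset.mem_range, mem_history]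
      exact ⟨hbs, fun ⟨k, _, hk⟩ => hb ⟨k, hk⟩⟩
    exact hM ▸ chainFun_lt_lastChange hturn hv
  have hturns : {n | sx ≤ n ∧ IsTurn gs n}.Infinite := infinite_of_forall_exists_gt fun a => by
    obtain ⟨n, hn, hturn⟩ := exists_isTurn_gt (gs := gs) (max a sx)
    exact ⟨n, ⟨by omega, hturn⟩, by omega⟩
  exact hturns.image chainFun_injective.injOn
    ((finite_Iio sx).subset (by rintro _ ⟨n, ⟨hn, hturn⟩, rfl⟩; exact hlate n hn hturn))

section Primrec

open Primrec

theorem primrecRel_notMem : PrimrecRel fun (b : ℕ) (L : List ℕ) => b ∉ L :=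
  (PrimrecRel.exists_mem_list Primrec.eq).not.swap.of_eq fun b L => by simp

-- `#(uncovered L m)` unfolds to the length of a filtered `List.range m`.
theorem primrec_card_uncovered : Primrec₂ fun L m => #(uncovered L m) :=
  list_length.comp (primrecRel_notMem.listFilter.comp (list_range.comp snd) fst)

theorem primrec_zeroChainEnd : Primrec zeroChainEnd :=
  nat_iterate (succ.comp list_length) (const 0) <|
    (option_getD.comp₂ list_getElem? Primrec₂.right).of_eq fun _ _ =>
      List.getD_eq_getElem?_getD.symm

theorem primrecRel_isChangePoint (hgs : Primrec₂ gs) : PrimrecRel (IsChangePoint gs) := by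
  have hchange : PrimrecRel fun y s => gs y (s - 1) ≠ gs y s :=
    (Primrec.eq.comp (hgs.comp fst (nat_sub.comp snd (const 1))) (hgs.comp fst snd)).not
  exact (hchange.exists_lt.comp₂ (succ.comp₂ Primrec₂.left) Primrec₂.right).of_eq fun x s => by
    simp [IsChangePoint]

theorem primrec_lastChange (hgs : Primrec₂ gs) : Primrec₂ (lastChange gs) :=
  nat_findGreatest snd ((primrecRel_isChangePoint hgs).comp (fst.comp fst) snd)

theorem primrecRel_violated (hgs : Primrec₂ gs) : PrimrecRel (Violated gs) :=
  nat_lt.comp (succ.comp snd)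
    (primrec_card_uncovered.comp fst ((primrec_lastChange hgs).comp snd (list_length.comp fst)))

theorem primrec_coverValue (hgs : Primrec₂ gs) : Primrec₂ (coverValue gs) :=
  nat_findGreatest
    (nat_sub.comp ((primrec_lastChange hgs).comp snd (list_length.comp fst)) (const 1))
    ((Primrec.eq.comp snd (const 0)).not.and (primrecRel_notMem.comp snd (fst.comp fst)))

theorem primrec_nextValue (hgs : Primrec₂ gs) : Primrec (nextValue gs) := by
  have hfresh : Primrec fun L : List ℕ => 2 * L.length + 1 :=
    succ.comp (nat_mul.comp (const 2) list_length)
  have hfind : Primrec fun L : List ℕ => (List.range L.length).find? (Violated gs L ·) :=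
    (list_head?.comp ((primrecRel_violated hgs).swap.listFilter.comp
      (list_range.comp list_length) Primrec.id)).of_eq fun L => List.head?_filter
  refine ite (Primrec.eq.comp primrec_zeroChainEnd list_length)
    ((option_casesOn hfind hfresh (primrec_coverValue hgs)).of_eq fun L => ?_) hfresh
  cases (List.range L.length).find? (Violated gs L ·) <;> rfl

theorem primrec_chainFun (hgs : Primrec₂ gs) : Primrec (chainFun gs) := by
  have := nat_strong_rec (fun (_ : Unit) n => chainFun gs n)
    (option_some.comp ((primrec_nextValue hgs).comp snd)).to₂
    fun _ n => by rw [← history_eq_map]; rfl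
  exact this.comp (const ()) Primrec.id

end Primrec

end SparseHeads

theorem sparse_heads_below_stabilization (gs : ℕ → ℕ → ℕ) (hgs : Primrec₂ gs)
    (hev : ∀ y : ℕ, ∃ s₀ : ℕ, ∀ t ≥ s₀, gs y t = gs y s₀) :
    ∃ f : ℕ → ℕ, Primrec f ∧ Function.Injective f ∧
      (∀ n : ℕ, IsOmegaChain f n) ∧
      {O : Set ℕ | ∃ n : ℕ, O = Orbit f n}.Infinite ∧
      (∀ x sx : ℕ,
        IsLeast {s : ℕ | ∀ y ≤ x, ∀ t ≥ s, gs y t = gs y s} sx →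
        {b : ℕ | b ∉ Set.range f ∧ b < sx}.ncard ≤ x + 1) :=
  ⟨SparseHeads.chainFun gs, SparseHeads.primrec_chainFun hgs, SparseHeads.chainFun_injective,
    SparseHeads.isOmegaChain,
    infinite_orbits_of_infinite_compl_range SparseHeads.chainFun_injective
      (SparseHeads.infinite_compl_range hev),
    fun _ _ => SparseHeads.ncard_heads_le⟩
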